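/- If E is a centrally orthocomplete generalized pseudoeffect algebra (COGPEA), then for every e ∈ E the exocentral cover γ_e exists and γ_e = ⋀{π ∈ ΓEX(E) : πe = e}, the infimum being taken in the complete boolean algebra ΓEX(E). -/

import Mathlib

/- Common framework: generalized pseudoeffect algebras (GPEAs), after
   Foulis, Pulmannová, Vinceková, "The exocenter and type decompositions for
   generalized pseudoeffect algebras".
   A partial binary operation ⊕ is represented by its graph
   `R : E → E → E → Prop`, where `R a b s` means "a ⊕ b is defined and equals s". -/

universe u v

namespace GPEApaper

/-- Raw data of a partial algebra: the graph of a partial binary operation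
together with a zero element. -/
structure PartialAlg (E : Type u) where
  R : E → E → E → Prop
  zero : E

namespace PartialAlg

variable {E : Type u} (A : PartialAlg E)

/-- The axioms (GPEA1)–(GPEA5) of a generalized pseudoeffect algebra,
including the functionality (well-definedness) of the partial operation. -/
def IsGPEA : Prop :=
  -- ⊕ is a partial operation (single-valued)
  (∀ a b c d : E, A.R a b c → A.R a b d → c = d) ∧
  -- (GPEA1) associativity, both directions
  (∀ a b c ab abc : E, A.R a b ab → A.R ab c abc → ∃ bc, A.R b c bc ∧ A.R a bc abc) ∧
  (∀ a b c bc abc : E, A.R b c bc → A.R a bc abc → ∃ ab, A.R a b ab ∧ A.R ab c abc) ∧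
  -- (GPEA2) conjugacy
  (∀ a b s : E, A.R a b s → (∃ d, A.R d a s) ∧ (∃ e, A.R b e s)) ∧
  -- (GPEA3) cancellation
  (∀ a b c s : E, A.R a b s → A.R a c s → b = c) ∧
  (∀ a b c s : E, A.R b a s → A.R c a s → b = c) ∧
  -- (GPEA4) positivity
  (∀ a b : E, A.R a b A.zero → a = A.zero ∧ b = A.zero) ∧
  -- (GPEA5) zero element
  (∀ a : E, A.R a A.zero a ∧ A.R A.zero a a)

/-- a ⊕ b is defined. -/
def Defined (a b : E) : Prop := ∃ s, A.R a b s

/-- The induced partial order: a ≤ b iff a ⊕ x = b for some x. -/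
def le (a b : E) : Prop := ∃ x, A.R a x b

/-- Orthogonality: p ⊥ q iff p ⊕ q and q ⊕ p both exist and are equal. -/
def perp (a b : E) : Prop := ∃ s, A.R a b s ∧ A.R b a s

/-- b is an upper bound of the set S. -/
def IsUB (S : Set E) (b : E) : Prop := ∀ a ∈ S, A.le a b

/-- s is the supremum (least upper bound) of the set S in (E, ≤). -/
def IsSup (S : Set E) (s : E) : Prop := A.IsUB S s ∧ ∀ b, A.IsUB S b → A.le s b

/-- s is the infimum (greatest lower bound) of the set S in (E, ≤). -/
def IsInf (S : Set E) (s : E) : Prop :=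
  (∀ a ∈ S, A.le s a) ∧ ∀ b, (∀ a ∈ S, A.le b a) → A.le b s

/-- An ideal of a GPEA. -/
def IsIdeal (I : Set E) : Prop :=
  I.Nonempty ∧ (∀ a ∈ I, ∀ b, A.le b a → b ∈ I) ∧
    ∀ a ∈ I, ∀ b ∈ I, ∀ s, A.R a b s → s ∈ I

/-- E = S ⊕ S′ : S and S′ are ideals, elements of S are orthogonal to elements
of S′, and every element of E has a unique decomposition a = a₁ ⊕ a₂ with
a₁ ∈ S, a₂ ∈ S′. -/
def IsDirectSum (S S' : Set E) : Prop :=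
  A.IsIdeal S ∧ A.IsIdeal S' ∧ (∀ a ∈ S, ∀ b ∈ S', A.perp a b) ∧
    ∀ a : E, ∃! p : E × E, p.1 ∈ S ∧ p.2 ∈ S' ∧ A.R p.1 p.2 a

/-- A central ideal (direct summand). -/
def IsCentralIdeal (S : Set E) : Prop := ∃ S', A.IsDirectSum S S'

/-- A normal ideal. -/
def IsNormalIdeal (I : Set E) : Prop :=
  A.IsIdeal I ∧ ∀ a x y s : E, A.R a x s → A.R y a s → (x ∈ I ↔ y ∈ I)

/-- The axioms (EXC1)–(EXC4): π belongs to the exocenter ΓEX(E). -/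
def IsExo (π : E → E) : Prop :=
  (∀ e f s, A.R e f s → A.R (π e) (π f) (π s)) ∧
  (∀ e, π (π e) = π e) ∧
  (∀ e, A.le (π e) e) ∧
  (∀ e f, π e = e → π f = A.zero → A.perp e f)

/-- For a ≤ b, `A.rdiv a b` is the element a/b, i.e. the unique x with
a ⊕ x = b (chosen by Hilbert choice when it exists). -/
noncomputable def rdiv (a b : E) : E :=
  letI : Nonempty E := ⟨A.zero⟩
  Classical.epsilon fun x => A.R a x b

/-- For π in the exocenter, π′ e := (π e)/e. -/
noncomputable def exoCompl (π : E → E) : E → E := fun e => A.rdiv (π e) e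

/-- The order on the exocenter: ξ ≤ π iff ξ = ξ ∘ π. -/
def exoLe (_A : PartialAlg E) (ξ π : E → E) : Prop := ξ = ξ ∘ π

/-- Disjointness in the boolean algebra ΓEX(E): the meet (= composition)
of ξ and π is the zero map. -/
def exoDisjoint (ξ π : E → E) : Prop := ∀ e, ξ (π e) = A.zero

/-- The join in the boolean algebra ΓEX(E): π ∨ ξ = (π′ ∘ ξ′)′. -/
noncomputable def exoSup (π ξ : E → E) : E → E :=
  A.exoCompl (A.exoCompl π ∘ A.exoCompl ξ)

/-- σ is the least upper bound of a set S of exocenter elements,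
with respect to the order of the boolean algebra ΓEX(E). -/
def IsExoLUB (S : Set (E → E)) (σ : E → E) : Prop :=
  A.IsExo σ ∧ (∀ π ∈ S, A.exoLe π σ) ∧
    ∀ β, A.IsExo β → (∀ π ∈ S, A.exoLe π β) → A.exoLe σ β

/-- A central element (C1)–(C4). -/
def Central (c : E) : Prop :=
  (∀ a : E, ∃ a₁ a₂, A.le a₁ c ∧ A.Defined a₂ c ∧ A.R a₁ a₂ a) ∧
  (∀ a b : E, A.le a c → A.Defined b c → A.perp a b) ∧
  (∀ a b s : E, A.le a c → A.le b c → A.R a b s → A.le s c) ∧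
  (∀ a b ab : E, A.Defined a c → A.Defined b c → A.R a b ab → A.Defined ab c)

/-- `A.ListSumsTo [e₁, …, eₙ] s` : the orthosum e₁ ⊕ (e₂ ⊕ (⋯ ⊕ eₙ)) is
defined and equals s (empty orthosum is 0). -/
def ListSumsTo (A : PartialAlg E) : List E → E → Prop
  | [], s => s = A.zero
  | a :: l, s => ∃ t, A.ListSumsTo l t ∧ A.R a t s

/-- The finite subfamily indexed by F is orthogonal with orthosum s:
every enumeration of F yields the orthosum s. -/
def FinsetSumsTo {ι : Type v} (e : ι → E) (F : Finset ι) (s : E) : Prop :=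
  ∀ l : List ι, l.Nodup →
    (letI : DecidableEq ι := Classical.decEq ι; l.toFinset) = F →
    A.ListSumsTo (l.map e) s

/-- A family is orthogonal iff every finite subfamily is orthogonal
(all enumerations have a common orthosum). -/
def IsOrthogonal {ι : Type v} (e : ι → E) : Prop :=
  ∀ F : Finset ι, ∃ s, A.FinsetSumsTo e F s

/-- A family is orthosummable with orthosum s iff it is orthogonal and s is
the supremum of its finite partial orthosums. -/
def IsOrthosum {ι : Type v} (e : ι → E) (s : E) : Prop :=
  A.IsOrthogonal e ∧ A.IsSup {t | ∃ F : Finset ι, A.FinsetSumsTo e F t} s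

/-- A family (eᵢ) is ΓEX-orthogonal iff there is a pairwise disjoint family
(πᵢ) in the exocenter with πᵢ eᵢ = eᵢ for all i. -/
def GEXOrthogonal {ι : Type v} (e : ι → E) : Prop :=
  ∃ π : ι → E → E, (∀ i, A.IsExo (π i)) ∧
    (∀ i j, i ≠ j → A.exoDisjoint (π i) (π j)) ∧ ∀ i, π i (e i) = e i

/-- E is centrally orthocomplete: (CO1) every ΓEX-orthogonal family is
orthosummable, and (CO2) orthosums respect one-sided summability. -/
def IsCOGPEA : Prop :=
  (∀ {ι : Type u} (e : ι → E), A.GEXOrthogonal e → ∃ s, A.IsOrthosum e s) ∧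
  (∀ {ι : Type u} (e : ι → E) (s : E), A.GEXOrthogonal e → A.IsOrthosum e s →
    ∀ a : E, ((∀ i, A.Defined a (e i)) → A.Defined a s) ∧
             ((∀ i, A.Defined (e i) a) → A.Defined s a))

/-- γ is the exocentral cover of e: the smallest element of ΓEX(E) fixing e. -/
def IsExoCover (e : E) (γ : E → E) : Prop :=
  A.IsExo γ ∧ γ e = e ∧ ∀ π, A.IsExo π → π e = e → A.exoLe γ π

/-- The restriction of the partial algebra to a subset containing 0 (with the
operation defined whenever it is defined in E and the result lies in the subset). -/
def restrictSet (S : Set E) (h0 : A.zero ∈ S) : PartialAlg S where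
  R a b s := A.R a.1 b.1 s.1
  zero := ⟨A.zero, h0⟩

/-- The axioms (PEA1)–(PEA4) of a pseudoeffect algebra with unit `one`
(including single-valuedness of the partial operation). -/
def IsPEA (one : E) : Prop :=
  (∀ a b c d : E, A.R a b c → A.R a b d → c = d) ∧
  -- (PEA1)
  (∀ a b c ab abc : E, A.R a b ab → A.R ab c abc → ∃ bc, A.R b c bc ∧ A.R a bc abc) ∧
  (∀ a b c bc abc : E, A.R b c bc → A.R a bc abc → ∃ ab, A.R a b ab ∧ A.R ab c abc) ∧
  -- (PEA2)
  (∀ a : E, ∃! d, A.R a d one) ∧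
  (∀ a : E, ∃! e, A.R e a one) ∧
  -- (PEA3)
  (∀ a b s : E, A.R a b s → (∃ d, A.R d a s) ∧ (∃ e, A.R b e s)) ∧
  -- (PEA4)
  (∀ a s : E, A.R one a s ∨ A.R a one s → a = A.zero)

end PartialAlg

end GPEApaper

/- In a COGPEA a pairwise disjoint family (πᵢ) in ΓEX(E) has a join σ, computed pointwise as the
orthosum σ g = ⊕ᵢ πᵢ g: its finite partial sums are the finite joins of the πᵢ, and (CO2) is what
makes σ satisfy (EXC4). By Zorn's lemma choose a maximal disjoint family (πᵢ) among the π with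
π e = 0, and let σ be its join. Any π with π e = 0 satisfies π ≤ σ, since otherwise π ∘ σ′ would
extend the family; applied to π′ for an arbitrary π fixing e this gives σ′ ≤ π, so γ_e = σ′. -/

theorem exists_maximal_pairwise_subset {α : Type*} (r : α → α → Prop) (T : Set α) :
    ∃ M, Maximal (fun D => D ⊆ T ∧ D.Pairwise r) M :=
  zorn_subset _ fun c hcS hc =>
    ⟨⋃₀ c, ⟨Set.sUnion_subset fun _ hD => (hcS hD).1,
      (Set.pairwise_sUnion hc.directedOn).2 fun _ hD => (hcS hD).2⟩,
      fun _ hD => Set.subset_sUnion_of_mem hD⟩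

namespace GPEApaper
namespace PartialAlg

variable {E : Type u} {A : PartialAlg E}

theorem perp.symm {a b : E} (h : A.perp a b) : A.perp b a :=
  let ⟨s, hab, hba⟩ := h; ⟨s, hba, hab⟩

namespace IsGPEA

variable (hA : A.IsGPEA)
include hA

theorem R_unique {a b c d : E} : A.R a b c → A.R a b d → c = d := hA.1 a b c d

theorem assoc {a b c ab abc : E} :
    A.R a b ab → A.R ab c abc → ∃ bc, A.R b c bc ∧ A.R a bc abc := hA.2.1 a b c ab abc

theorem assoc' {a b c bc abc : E} :
    A.R b c bc → A.R a bc abc → ∃ ab, A.R a b ab ∧ A.R ab c abc := hA.2.2.1 a b c bc abc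

theorem cancel_left {a b c s : E} : A.R a b s → A.R a c s → b = c := hA.2.2.2.2.1 a b c s

theorem cancel_right {a b c s : E} : A.R b a s → A.R c a s → b = c := hA.2.2.2.2.2.1 a b c s

theorem R_zero_right (a : E) : A.R a A.zero a := (hA.2.2.2.2.2.2.2 a).1

theorem R_zero_left (a : E) : A.R A.zero a a := (hA.2.2.2.2.2.2.2 a).2

theorem zero_le (a : E) : A.le A.zero a := ⟨a, hA.R_zero_left a⟩

theorem le_of_R_right {y a b : E} (h : A.R y a b) : A.le a b := (hA.2.2.2.1 y a b h).2

theorem le_iff_exists_R_right {a b : E} : A.le a b ↔ ∃ y, A.R y a b :=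
  ⟨fun ⟨_, hx⟩ => (hA.2.2.2.1 _ _ _ hx).1, fun ⟨_, hy⟩ => hA.le_of_R_right hy⟩

theorem le_trans {a b c : E} (hab : A.le a b) (hbc : A.le b c) : A.le a c := by
  obtain ⟨x, hx⟩ := hab
  obtain ⟨y, hy⟩ := hbc
  obtain ⟨z, -, hz⟩ := hA.assoc hx hy
  exact ⟨z, hz⟩

theorem eq_zero_of_le_zero {a : E} (h : A.le a A.zero) : a = A.zero := by
  obtain ⟨x, hx⟩ := h
  exact (hA.2.2.2.2.2.2.1 a x hx).1

theorem le_antisymm {a b : E} (hab : A.le a b) (hba : A.le b a) : a = b := by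
  obtain ⟨x, hx⟩ := hab
  obtain ⟨y, hy⟩ := hba
  obtain ⟨z, hxy, hz⟩ := hA.assoc hx hy
  have hz0 : z = A.zero := hA.cancel_left hz (hA.R_zero_right a)
  have hx0 : x = A.zero := (hA.2.2.2.2.2.2.1 x y (hz0 ▸ hxy)).1
  exact hA.R_unique (hA.R_zero_right a) (hx0 ▸ hx)

theorem isSup_unique {S : Set E} {s t : E} (hs : A.IsSup S s) (ht : A.IsSup S t) : s = t :=
  hA.le_antisymm (hs.2 t ht.1) (ht.2 s hs.1)

theorem exists_R_le_of_le_right {a b c t : E} (hbc : A.le b c) (ht : A.R a c t) :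
    ∃ s, A.R a b s ∧ A.le s t := by
  obtain ⟨x, hx⟩ := hbc
  obtain ⟨s, hs, hst⟩ := hA.assoc' hx ht
  exact ⟨s, hs, x, hst⟩

theorem exists_R_le_of_le_left {a b c t : E} (hbc : A.le b c) (ht : A.R c a t) :
    ∃ s, A.R b a s ∧ A.le s t := by
  obtain ⟨y, hy⟩ := hA.le_iff_exists_R_right.1 hbc
  obtain ⟨s, hs, hst⟩ := hA.assoc hy ht
  exact ⟨s, hs, hA.le_of_R_right hst⟩

theorem isSup_R_left {S : Set E} {s h q : E} (hS : S.Nonempty) (hs : A.IsSup S s)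
    (hq : A.R h s q) : A.IsSup {w | ∃ t ∈ S, A.R h t w} q := by
  refine ⟨?_, fun b hb => ?_⟩
  · rintro w ⟨t, ht, hw⟩
    obtain ⟨w', hw', hle⟩ := hA.exists_R_le_of_le_right (hs.1 t ht) hq
    exact hA.R_unique hw' hw ▸ hle
  -- `h ⊕ B = b` determines `B` by cancellation, so a single `B` lies above every `t ∈ S`
  have key : ∀ t ∈ S, ∃ B, A.le t B ∧ A.R h B b := by
    intro t ht
    obtain ⟨w, hw, -⟩ := hA.exists_R_le_of_le_right (hs.1 t ht) hq
    obtain ⟨x, hx⟩ := hb w ⟨t, ht, hw⟩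
    obtain ⟨B, hB, hBb⟩ := hA.assoc hw hx
    exact ⟨B, ⟨x, hB⟩, hBb⟩
  obtain ⟨t₀, ht₀⟩ := hS
  obtain ⟨B, -, hB⟩ := key t₀ ht₀
  obtain ⟨y, hy⟩ : A.le s B := hs.2 B fun t ht => by
    obtain ⟨B', hB', hB'b⟩ := key t ht
    exact hA.cancel_left hB'b hB ▸ hB'
  obtain ⟨q', hq', hq'b⟩ := hA.assoc' hy hB
  exact ⟨y, hA.R_unique hq' hq ▸ hq'b⟩

theorem isSup_R_right {S : Set E} {s h q : E} (hS : S.Nonempty) (hs : A.IsSup S s)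
    (hq : A.R s h q) : A.IsSup {w | ∃ t ∈ S, A.R t h w} q := by
  refine ⟨?_, fun b hb => ?_⟩
  · rintro w ⟨t, ht, hw⟩
    obtain ⟨w', hw', hle⟩ := hA.exists_R_le_of_le_left (hs.1 t ht) hq
    exact hA.R_unique hw' hw ▸ hle
  have key : ∀ t ∈ S, ∃ C, A.le t C ∧ A.R C h b := by
    intro t ht
    obtain ⟨w, hw, -⟩ := hA.exists_R_le_of_le_left (hs.1 t ht) hq
    obtain ⟨x, hx⟩ := hA.le_iff_exists_R_right.1 (hb w ⟨t, ht, hw⟩)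
    obtain ⟨C, hC, hCb⟩ := hA.assoc' hw hx
    exact ⟨C, hA.le_of_R_right hC, hCb⟩
  obtain ⟨t₀, ht₀⟩ := hS
  obtain ⟨C, -, hC⟩ := key t₀ ht₀
  obtain ⟨y, hy⟩ := hA.le_iff_exists_R_right.1 <| hs.2 C fun t ht => by
    obtain ⟨C', hC', hC'b⟩ := key t ht
    exact hA.cancel_right hC'b hC ▸ hC'
  obtain ⟨q', hq', hq'b⟩ := hA.assoc hy hC
  exact hA.le_of_R_right (hA.R_unique hq' hq ▸ hq'b)

theorem perp_R_right {a b c d s w : E} (hab : A.perp a b) (hac : A.perp a c)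
    (hbc : A.R b c d) (hs : A.R a b s) (hw : A.R s c w) : A.perp a d := by
  obtain ⟨s', hs', hba⟩ := hab
  obtain rfl := hA.R_unique hs hs'
  obtain ⟨d', hd', had⟩ := hA.assoc hs hw
  obtain rfl := hA.R_unique hd' hbc
  obtain ⟨ac, hac', hbw⟩ := hA.assoc hba hw
  obtain ⟨ac', hac'', hca⟩ := hac
  obtain rfl := hA.R_unique hac'' hac'
  obtain ⟨d'', hd'', hdw⟩ := hA.assoc' hca hbw
  obtain rfl := hA.R_unique hd'' hd'
  exact ⟨w, had, hdw⟩

end IsGPEA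

namespace IsExo

variable {π ξ : E → E}

theorem map_R (hπ : A.IsExo π) {e f s : E} (h : A.R e f s) : A.R (π e) (π f) (π s) :=
  hπ.1 e f s h

theorem idem (hπ : A.IsExo π) (e : E) : π (π e) = π e := hπ.2.1 e

theorem apply_le (hπ : A.IsExo π) (e : E) : A.le (π e) e := hπ.2.2.1 e

theorem perp (hπ : A.IsExo π) {e f : E} (he : π e = e) (hf : π f = A.zero) : A.perp e f :=
  hπ.2.2.2 e f he hf

theorem mono (hπ : A.IsExo π) {a b : E} (h : A.le a b) : A.le (π a) (π b) :=
  let ⟨x, hx⟩ := h; ⟨π x, hπ.map_R hx⟩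

theorem map_zero (hA : A.IsGPEA) (hπ : A.IsExo π) : π A.zero = A.zero :=
  hA.eq_zero_of_le_zero (hπ.apply_le A.zero)

theorem R_compl (hπ : A.IsExo π) (f : E) : A.R (π f) (A.exoCompl π f) f :=
  Classical.epsilon_spec (hπ.apply_le f)

variable (hA : A.IsGPEA)
include hA

theorem compl_unique (hπ : A.IsExo π) {f x : E} (h : A.R (π f) x f) : A.exoCompl π f = x :=
  hA.cancel_left (hπ.R_compl f) h

theorem apply_compl (hπ : A.IsExo π) (f : E) : π (A.exoCompl π f) = A.zero := by
  have h := hπ.map_R (hπ.R_compl f)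
  rw [hπ.idem] at h
  exact hA.cancel_left h (hA.R_zero_right (π f))

theorem compl_apply (hπ : A.IsExo π) (f : E) : A.exoCompl π (π f) = A.zero := by
  have h := hπ.R_compl (π f)
  rw [hπ.idem] at h
  exact hA.cancel_left h (hA.R_zero_right (π f))

theorem compl_eq_zero_iff (hπ : A.IsExo π) {f : E} : A.exoCompl π f = A.zero ↔ π f = f := by
  have hd := hπ.R_compl f
  constructor
  · intro h
    rw [h] at hd
    exact hA.R_unique (hA.R_zero_right (π f)) hd
  · intro h
    rw [h] at hd
    exact hA.cancel_left hd (hA.R_zero_right f)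

theorem compl_eq_self_iff (hπ : A.IsExo π) {f : E} : A.exoCompl π f = f ↔ π f = A.zero := by
  have hd := hπ.R_compl f
  constructor
  · intro h
    rw [h] at hd
    exact hA.cancel_right hd (hA.R_zero_left f)
  · intro h
    rw [h] at hd
    exact hA.cancel_left hd (hA.R_zero_left f)

theorem compl_map_R (hπ : A.IsExo π) {e f s : E} (h : A.R e f s) :
    A.R (A.exoCompl π e) (A.exoCompl π f) (A.exoCompl π s) := by
  -- s = πe ⊕ π′e ⊕ πf ⊕ π′f, and π′e ⊥ πf may be swapped to reach πs ⊕ (π′e ⊕ π′f)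
  obtain ⟨t, hft, het⟩ := hπ.perp (hπ.idem f) (hπ.apply_compl hA e)
  obtain ⟨u, hu, hus⟩ := hA.assoc (hπ.R_compl e) h
  obtain ⟨v, hv, hvu⟩ := hA.assoc' (hπ.R_compl f) hu
  obtain rfl := hA.R_unique hv het
  obtain ⟨w, hw, hwu⟩ := hA.assoc hft hvu
  obtain ⟨z, hz, hzs⟩ := hA.assoc' hwu hus
  obtain rfl := hA.R_unique hz (hπ.map_R h)
  exact hπ.compl_unique hA hzs ▸ hw

theorem compl_mono (hπ : A.IsExo π) {a b : E} (h : A.le a b) :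
    A.le (A.exoCompl π a) (A.exoCompl π b) :=
  let ⟨x, hx⟩ := h; ⟨A.exoCompl π x, hπ.compl_map_R hA hx⟩

theorem eq_self_of_le (hπ : A.IsExo π) {a b : E} (hab : A.le a b) (hb : π b = b) : π a = a := by
  have h := hπ.compl_mono hA hab
  rw [(hπ.compl_eq_zero_iff hA).2 hb] at h
  exact (hπ.compl_eq_zero_iff hA).1 (hA.eq_zero_of_le_zero h)

theorem comm (hπ : A.IsExo π) (hξ : A.IsExo ξ) (f : E) : π (ξ f) = ξ (π f) := by
  have h := hπ.map_R (hξ.map_R (hπ.R_compl f))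
  have h₁ : π (ξ (π f)) = ξ (π f) := hπ.eq_self_of_le hA (hξ.apply_le (π f)) (hπ.idem f)
  have h₂ : π (ξ (A.exoCompl π f)) = A.zero := hA.eq_zero_of_le_zero <|
    hπ.apply_compl hA f ▸ hπ.mono (hξ.apply_le _)
  rw [h₁, h₂] at h
  exact hA.R_unique h (hA.R_zero_right _)

theorem comp (hπ : A.IsExo π) (hξ : A.IsExo ξ) : A.IsExo (π ∘ ξ) := by
  refine ⟨fun e f s h => hπ.map_R (hξ.map_R h), fun e => ?_,
    fun e => hA.le_trans (hπ.apply_le (ξ e)) (hξ.apply_le e), fun e f he hf => ?_⟩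
  · change π (ξ (π (ξ e))) = π (ξ e)
    rw [hξ.comm hA hπ, hπ.idem, hξ.idem]
  change π (ξ e) = e at he
  change π (ξ f) = A.zero at hf
  have hξe : ξ e = e := hA.le_antisymm (hξ.apply_le e) (by simpa only [he] using hπ.apply_le (ξ e))
  rw [hξe] at he
  -- split f = ξ f ⊕ ξ′f; e is orthogonal to both parts
  obtain ⟨s, hs, hs'⟩ := hπ.perp he hf
  have hξs : ξ s = s := by
    have h := hξ.map_R hs
    rw [hξe, hξ.idem] at h
    exact hA.R_unique h hs
  obtain ⟨w, hw, -⟩ := hξ.perp hξs (hξ.apply_compl hA f)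
  exact hA.perp_R_right ⟨s, hs, hs'⟩ (hξ.perp hξe (hξ.apply_compl hA f)) (hξ.R_compl f) hs hw

theorem compl (hπ : A.IsExo π) : A.IsExo (A.exoCompl π) := by
  refine ⟨fun e f s h => hπ.compl_map_R hA h,
    fun e => (hπ.compl_eq_self_iff hA).2 (hπ.apply_compl hA e),
    fun e => hA.le_of_R_right (hπ.R_compl e), fun e f he hf => ?_⟩
  exact (hπ.perp ((hπ.compl_eq_zero_iff hA).1 hf) ((hπ.compl_eq_self_iff hA).1 he)).symm

theorem compl_compl (hπ : A.IsExo π) : A.exoCompl (A.exoCompl π) = π := by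
  funext f
  obtain ⟨s, hs, hs'⟩ := hπ.perp (hπ.idem f) (hπ.apply_compl hA f)
  obtain rfl := hA.R_unique hs (hπ.R_compl f)
  exact (hπ.compl hA).compl_unique hA hs'

theorem compl_exoLe_compl (hπ : A.IsExo π) (hξ : A.IsExo ξ) (h : A.exoLe ξ π) :
    A.exoLe (A.exoCompl π) (A.exoCompl ξ) := by
  funext f
  have hd := (hπ.compl hA).map_R (hξ.R_compl f)
  have h₀ : A.exoCompl π (ξ f) = A.zero := by
    rw [(hπ.compl hA).comm hA hξ, congrFun h, Function.comp_apply, hπ.apply_compl hA,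
      hξ.map_zero hA]
  rw [h₀] at hd
  exact (hA.R_unique (hA.R_zero_left _) hd).symm

theorem exoDisjoint_symm (hπ : A.IsExo π) (hξ : A.IsExo ξ) (h : A.exoDisjoint π ξ) :
    A.exoDisjoint ξ π := fun f => hξ.comm hA hπ f ▸ h f

end IsExo

theorem isExo_zero (hA : A.IsGPEA) : A.IsExo fun _ => A.zero := by
  refine ⟨fun _ _ _ _ => hA.R_zero_right A.zero, fun _ => rfl, hA.zero_le, ?_⟩
  intro e f he _
  change A.zero = e at he
  subst he
  exact ⟨f, hA.R_zero_left f, hA.R_zero_right f⟩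

section ExoSup

variable {π ξ χ : E → E} (hA : A.IsGPEA)
include hA

theorem isExo_exoSup (hπ : A.IsExo π) (hξ : A.IsExo ξ) : A.IsExo (A.exoSup π ξ) :=
  ((hπ.compl hA).comp hA (hξ.compl hA)).compl hA

theorem R_exoSup (hπ : A.IsExo π) (hξ : A.IsExo ξ) (hd : A.exoDisjoint π ξ) (g : E) :
    A.R (π g) (ξ g) (A.exoSup π ξ g) := by
  have hχ := (hπ.compl hA).comp hA (hξ.compl hA)
  have hξπ' : ξ (A.exoCompl π g) = ξ g := by
    have h := hξ.map_R (hπ.R_compl g)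
    rw [hξ.comm hA hπ, hd] at h
    exact hA.R_unique (hA.R_zero_left _) h
  obtain ⟨s, hs, hsg⟩ := hA.assoc' (hξ.R_compl (A.exoCompl π g)) (hπ.R_compl g)
  rw [hξπ'] at hs
  rw [← (hπ.compl hA).comm hA (hξ.compl hA)] at hsg
  have hg := (hχ.compl hA).R_compl g
  rw [hχ.compl_compl hA] at hg
  obtain rfl := hA.cancel_right hsg hg
  exact hs

theorem exoDisjoint_exoSup (hχ : A.IsExo χ) (hπ : A.IsExo π) (hξ : A.IsExo ξ)
    (hχπ : A.exoDisjoint χ π) (hχξ : A.exoDisjoint χ ξ) (hπξ : A.exoDisjoint π ξ) :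
    A.exoDisjoint χ (A.exoSup π ξ) := fun g => by
  have h := hχ.map_R (R_exoSup hA hπ hξ hπξ g)
  rw [hχπ, hχξ] at h
  exact hA.R_unique h (hA.R_zero_right A.zero)

end ExoSup

theorem listSumsTo_unique (hA : A.IsGPEA) :
    ∀ {l : List E} {s t : E}, A.ListSumsTo l s → A.ListSumsTo l t → s = t
  | [], _, _, hs, ht => hs.trans ht.symm
  | _ :: _, _, _, ⟨_, hu, hus⟩, ⟨_, hv, hvt⟩ => by
    obtain rfl := listSumsTo_unique hA hu hv
    exact hA.R_unique hus hvt

noncomputable def exoSupList {ι : Type v} (A : PartialAlg E) (p : ι → E → E) :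
    List ι → E → E
  | [] => fun _ => A.zero
  | i :: l => A.exoSup (p i) (A.exoSupList p l)

section ExoSupList

variable {ι : Type v} {p : ι → E → E} (hA : A.IsGPEA) (hp : ∀ i, A.IsExo (p i))
include hA hp

theorem isExo_exoSupList : ∀ l : List ι, A.IsExo (A.exoSupList p l)
  | [] => isExo_zero hA
  | i :: l => isExo_exoSup hA (hp i) (isExo_exoSupList l)

variable (hdisj : Pairwise fun i j => A.exoDisjoint (p i) (p j))
include hdisj

theorem exoDisjoint_exoSupList :
    ∀ {l : List ι}, l.Nodup → ∀ i ∉ l, A.exoDisjoint (p i) (A.exoSupList p l)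
  | [], _, i, _ => fun _ => (hp i).map_zero hA
  | j :: l, hl, i, hi => by
    rw [List.nodup_cons] at hl
    rw [List.mem_cons, not_or] at hi
    exact exoDisjoint_exoSup hA (hp i) (hp j) (isExo_exoSupList hA hp l) (hdisj hi.1)
      (exoDisjoint_exoSupList hl.2 i hi.2) (exoDisjoint_exoSupList hl.2 j hl.1)

theorem R_exoSupList_cons {i : ι} {l : List ι} (hl : (i :: l).Nodup) (g : E) :
    A.R (p i g) (A.exoSupList p l g) (A.exoSupList p (i :: l) g) := by
  rw [List.nodup_cons] at hl
  exact R_exoSup hA (hp i) (isExo_exoSupList hA hp l)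
    (exoDisjoint_exoSupList hA hp hdisj hl.2 i hl.1) g

theorem listSumsTo_exoSupList (g : E) :
    ∀ {l : List ι}, l.Nodup → A.ListSumsTo (l.map fun i => p i g) (A.exoSupList p l g)
  | [], _ => rfl
  | _ :: _, hl =>
    ⟨_, listSumsTo_exoSupList g (List.nodup_cons.1 hl).2,
      R_exoSupList_cons hA hp hdisj hl g⟩

theorem exoSupList_congr {x y : E} :
    ∀ {l : List ι}, l.Nodup → (∀ i ∈ l, p i x = p i y) →
      A.exoSupList p l x = A.exoSupList p l y
  | [], _, _ => rfl
  | i :: l, hl, h => by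
    have hx := R_exoSupList_cons hA hp hdisj hl x
    rw [h i List.mem_cons_self,
      exoSupList_congr (List.nodup_cons.1 hl).2 fun j hj => h j (List.mem_cons_of_mem i hj)] at hx
    exact hA.R_unique hx (R_exoSupList_cons hA hp hdisj hl y)

theorem exoSupList_singleton (i : ι) (g : E) : A.exoSupList p [i] g = p i g :=
  hA.R_unique (R_exoSupList_cons hA hp hdisj (List.nodup_singleton i) g) (hA.R_zero_right _)

end ExoSupList

noncomputable def exoISup {ι : Type v} (A : PartialAlg E) (p : ι → E → E) : E → E :=
  fun g =>
    letI : Nonempty E := ⟨A.zero⟩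
    Classical.epsilon fun s => A.IsOrthosum (fun i => p i g) s

section ExoISup

variable {ι : Type u} {p : ι → E → E} (hA : A.IsGPEA) (hCO : A.IsCOGPEA)
  (hp : ∀ i, A.IsExo (p i)) (hdisj : Pairwise fun i j => A.exoDisjoint (p i) (p j))
include hA hCO hp hdisj

omit hA hCO in
theorem gexOrthogonal_apply (g : E) : A.GEXOrthogonal fun i => p i g :=
  ⟨p, hp, fun _ _ hij => hdisj hij, fun i => (hp i).idem g⟩

omit hA in
theorem isOrthosum_exoISup (g : E) : A.IsOrthosum (fun i => p i g) (A.exoISup p g) :=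
  Classical.epsilon_spec (hCO.1 _ (gexOrthogonal_apply hp hdisj g))

theorem isSup_exoISup (g : E) :
    A.IsSup (Set.range fun F : Finset ι => A.exoSupList p F.toList g) (A.exoISup p g) := by
  have hsum := isOrthosum_exoISup hCO hp hdisj g
  have hF : ∀ {F : Finset ι} {t : E}, A.FinsetSumsTo (fun i => p i g) F t →
      t = A.exoSupList p F.toList g := fun {F _} h =>
    listSumsTo_unique hA (h F.toList F.nodup_toList (by classical exact F.toList_toFinset))
      (listSumsTo_exoSupList hA hp hdisj g F.nodup_toList)
  convert hsum.2 using 1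
  ext t
  constructor
  · rintro ⟨F, rfl⟩
    obtain ⟨t, ht⟩ := hsum.1 F
    obtain rfl := hF ht
    exact ⟨F, ht⟩
  · rintro ⟨F, hFt⟩
    exact ⟨F, (hF hFt).symm⟩

theorem exoSupList_le_exoISup (F : Finset ι) (g : E) :
    A.le (A.exoSupList p F.toList g) (A.exoISup p g) :=
  (isSup_exoISup hA hCO hp hdisj g).1 _ ⟨F, rfl⟩

theorem exoISup_le {g b : E} (h : ∀ F : Finset ι, A.le (A.exoSupList p F.toList g) b) :
    A.le (A.exoISup p g) b :=
  (isSup_exoISup hA hCO hp hdisj g).2 b (Set.forall_mem_range.2 h)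

theorem exoISup_le_self (g : E) : A.le (A.exoISup p g) g :=
  exoISup_le hA hCO hp hdisj fun F => (isExo_exoSupList hA hp F.toList).apply_le g

theorem apply_exoISup (i : ι) (g : E) : p i (A.exoISup p g) = p i g := by
  have hle : A.le (p i g) (A.exoISup p g) := by
    simpa [exoSupList_singleton hA hp hdisj] using exoSupList_le_exoISup hA hCO hp hdisj {i} g
  exact hA.le_antisymm ((hp i).mono (exoISup_le_self hA hCO hp hdisj g))
    ((hp i).idem g ▸ (hp i).mono hle)

theorem exoISup_congr {x y : E} (h : ∀ i, p i x = p i y) : A.exoISup p x = A.exoISup p y := by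
  have hx := isOrthosum_exoISup hCO hp hdisj x
  simp only [h] at hx
  exact hA.isSup_unique hx.2 (isOrthosum_exoISup hCO hp hdisj y).2

theorem exoISup_eq_zero {g : E} (h : ∀ i, p i g = A.zero) : A.exoISup p g = A.zero := by
  rw [exoISup_congr hA hCO hp hdisj fun i => (h i).trans ((hp i).map_zero hA).symm]
  exact hA.eq_zero_of_le_zero (exoISup_le_self hA hCO hp hdisj A.zero)

theorem exoISup_map_R {e f s : E} (h : A.R e f s) :
    A.R (A.exoISup p e) (A.exoISup p f) (A.exoISup p s) := by
  obtain ⟨b, hb⟩ : A.le (A.exoISup p e) (A.exoISup p s) :=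
    exoISup_le hA hCO hp hdisj fun F => hA.le_trans ((isExo_exoSupList hA hp _).mono ⟨f, h⟩)
      (exoSupList_le_exoISup hA hCO hp hdisj F s)
  -- each finite join takes the same value on f and on b, where σe ⊕ b = σs
  have hfb : A.le (A.exoISup p f) b := exoISup_le hA hCO hp hdisj fun F => by
    have hρ := isExo_exoSupList hA hp F.toList
    have hρσ : ∀ x, A.exoSupList p F.toList (A.exoISup p x) = A.exoSupList p F.toList x :=
      fun x => exoSupList_congr hA hp hdisj F.nodup_toList fun i _ =>
        apply_exoISup hA hCO hp hdisj i x
    have hρb := hρ.map_R hb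
    rw [hρσ, hρσ] at hρb
    exact hA.cancel_left (hρ.map_R h) hρb ▸ hρ.apply_le b
  obtain ⟨c, hc, hcs⟩ := hA.exists_R_le_of_le_right hfb hb
  have hσc : A.exoISup p c = A.exoISup p s := exoISup_congr hA hCO hp hdisj fun i => by
    have hi := (hp i).map_R hc
    rw [apply_exoISup hA hCO hp hdisj, apply_exoISup hA hCO hp hdisj] at hi
    exact hA.R_unique hi ((hp i).map_R h)
  exact hA.le_antisymm hcs (hσc ▸ exoISup_le_self hA hCO hp hdisj c) ▸ hc

theorem exoISup_perp {g h : E} (hg : A.exoISup p g = g) (hh : A.exoISup p h = A.zero) :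
    A.perp g h := by
  have hph : ∀ i, p i h = A.zero := fun i => by
    rw [← apply_exoISup hA hCO hp hdisj i, hh, (hp i).map_zero hA]
  have hperp : ∀ F : Finset ι, A.perp (A.exoSupList p F.toList g) h := fun F =>
    (isExo_exoSupList hA hp _).perp ((isExo_exoSupList hA hp _).idem g)
      (hA.eq_zero_of_le_zero (hh ▸ exoSupList_le_exoISup hA hCO hp hdisj F h))
  -- (CO2) provides both sums h ⊕ σg and σg ⊕ h; both are sups of the same translates
  have hCO2 := hCO.2 _ _ (gexOrthogonal_apply hp hdisj g) (isOrthosum_exoISup hCO hp hdisj g) h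
  have hpi : ∀ i, A.perp (p i g) h := fun i => (hp i).perp ((hp i).idem g) (hph i)
  obtain ⟨q₁, hq₁⟩ := hCO2.1 fun i => let ⟨s, _, hs⟩ := hpi i; ⟨s, hs⟩
  obtain ⟨q₂, hq₂⟩ := hCO2.2 fun i => let ⟨s, hs, _⟩ := hpi i; ⟨s, hs⟩
  have hS := isSup_exoISup hA hCO hp hdisj g
  have h₁ := hA.isSup_R_left (Set.range_nonempty _) hS hq₁
  have h₂ := hA.isSup_R_right (Set.range_nonempty _) hS hq₂
  have hset : {w | ∃ t ∈ Set.range fun F : Finset ι => A.exoSupList p F.toList g, A.R h t w} =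
      {w | ∃ t ∈ Set.range fun F : Finset ι => A.exoSupList p F.toList g, A.R t h w} := by
    ext w
    constructor <;> rintro ⟨_, ⟨F, rfl⟩, hw⟩ <;> obtain ⟨v, hv, hv'⟩ := hperp F <;>
      refine ⟨_, ⟨F, rfl⟩, ?_⟩
    · exact hA.R_unique hv' hw ▸ hv
    · exact hA.R_unique hv hw ▸ hv'
  rw [hset] at h₁
  obtain rfl := hA.isSup_unique h₁ h₂
  rw [hg] at hq₁ hq₂
  exact ⟨q₁, hq₂, hq₁⟩

theorem isExo_exoISup : A.IsExo (A.exoISup p) :=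
  ⟨fun _ _ _ h => exoISup_map_R hA hCO hp hdisj h,
    fun g => exoISup_congr hA hCO hp hdisj (apply_exoISup hA hCO hp hdisj · g),
    exoISup_le_self hA hCO hp hdisj, fun _ _ hg hh => exoISup_perp hA hCO hp hdisj hg hh⟩

theorem exoLe_exoISup (i : ι) : A.exoLe (p i) (A.exoISup p) :=
  funext fun g => (apply_exoISup hA hCO hp hdisj i g).symm

end ExoISup

section Cover

variable (hA : A.IsGPEA) (hCO : A.IsCOGPEA) {e : E} {M : Set (E → E)}
  (hM : Maximal (fun D => D ⊆ {ξ | A.IsExo ξ ∧ ξ e = A.zero} ∧ D.Pairwise A.exoDisjoint) M)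
include hA hCO hM

omit hA hCO in
theorem isExo_of_maximal (m : M) : A.IsExo m := (hM.1.1 m.2).1

omit hA hCO in
theorem pairwise_exoDisjoint_of_maximal : Pairwise fun m n : M => A.exoDisjoint m n :=
  fun m n hmn => hM.1.2 m.2 n.2 (Subtype.coe_injective.ne hmn)

theorem exoLe_exoISup_of_maximal {t : E → E} (ht : A.IsExo t) (hte : t e = A.zero) :
    A.exoLe t (A.exoISup fun m : M => (m : E → E)) := by
  have hp := isExo_of_maximal hM
  have hdisj := pairwise_exoDisjoint_of_maximal hM
  set σ := A.exoISup fun m : M => (m : E → E)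
  have hσ : A.IsExo σ := isExo_exoISup hA hCO hp hdisj
  have hσe : σ e = A.zero := exoISup_eq_zero hA hCO hp hdisj fun m => (hM.1.1 m.2).2
  have ht₀ : A.IsExo (t ∘ A.exoCompl σ) := ht.comp hA (hσ.compl hA)
  have hdisj₀ : ∀ m ∈ M, A.exoDisjoint m (t ∘ A.exoCompl σ) := fun m hm f => by
    have hm' : A.IsExo m := (hM.1.1 hm).1
    have hmσ : m (A.exoCompl σ f) = m (σ (A.exoCompl σ f)) :=
      congrFun (exoLe_exoISup hA hCO hp hdisj ⟨m, hm⟩) _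
    change m (t (A.exoCompl σ f)) = A.zero
    rw [hm'.comm hA ht, hmσ, hσ.apply_compl hA, hm'.map_zero hA, ht.map_zero hA]
  -- by maximality t ∘ σ′ belongs to the family, hence lies below σ and so vanishes
  have ht₀M : t ∘ A.exoCompl σ ∈ M := hM.mem_of_prop_insert
    ⟨Set.insert_subset ⟨ht₀, by simp [(hσ.compl_eq_self_iff hA).2 hσe, hte]⟩ hM.1.1,
      hM.1.2.insert fun m hm _ =>
        ⟨(hM.1.1 hm).1.exoDisjoint_symm hA ht₀ (hdisj₀ m hm), hdisj₀ m hm⟩⟩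
  have hzero : ∀ f, t (A.exoCompl σ f) = A.zero := fun f => by
    have h := congrFun (exoLe_exoISup hA hCO hp hdisj ⟨_, ht₀M⟩) f
    simp only [Function.comp_apply] at h
    rw [h, hσ.compl_apply hA, ht.map_zero hA]
  funext f
  have h := ht.map_R (hσ.R_compl f)
  rw [hzero] at h
  exact (hA.R_unique (hA.R_zero_right _) h).symm

theorem isExoCover_compl_exoISup_of_maximal :
    A.IsExoCover e (A.exoCompl (A.exoISup fun m : M => (m : E → E))) := by
  have hp := isExo_of_maximal hM
  have hdisj := pairwise_exoDisjoint_of_maximal hM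
  have hσ := isExo_exoISup hA hCO hp hdisj
  refine ⟨hσ.compl hA, (hσ.compl_eq_self_iff hA).2
    (exoISup_eq_zero hA hCO hp hdisj fun m => (hM.1.1 m.2).2), fun π hπ hπe => ?_⟩
  have h := exoLe_exoISup_of_maximal hA hCO hM (hπ.compl hA) ((hπ.compl_eq_zero_iff hA).2 hπe)
  simpa only [hπ.compl_compl hA] using hσ.compl_exoLe_compl hA (hπ.compl hA) h

end Cover

theorem exists_isExoCover (hA : A.IsGPEA) (hCO : A.IsCOGPEA) (e : E) :
    ∃ γ, A.IsExoCover e γ :=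
  let ⟨_, hM⟩ := exists_maximal_pairwise_subset A.exoDisjoint {ξ | A.IsExo ξ ∧ ξ e = A.zero}
  ⟨_, isExoCover_compl_exoISup_of_maximal hA hCO hM⟩

end PartialAlg
end GPEApaper

open GPEApaper PartialAlg in
/-- Theorem 6.2: in a COGPEA, every element e has an exocentral cover γ_e,
and γ_e is the infimum of {π ∈ ΓEX(E) : π e = e} in ΓEX(E). -/
theorem stmt_15 {E : Type u} (A : PartialAlg E) (hA : A.IsGPEA)
    (hCO : A.IsCOGPEA) (e : E) :
    ∃ γ : E → E, A.IsExoCover e γ ∧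
      (∀ π : E → E, A.IsExo π → π e = e → A.exoLe γ π) ∧
      ∀ β : E → E, A.IsExo β →
        (∀ π : E → E, A.IsExo π → π e = e → A.exoLe β π) → A.exoLe β γ := by
  obtain ⟨γ, hγ⟩ := exists_isExoCover hA hCO e
  exact ⟨γ, hγ, hγ.2.2, fun β _ hβ => hβ γ hγ.1 hγ.2.1⟩
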